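/- arXiv:1906.09015 — 3 statements merged into one kernel-verified Lean document; each statement's English description precedes it below -/
import Mathlib

section
/- If e is contained in a line in R^2 (the zero set of a nonzero affine polynomial) and e contains at least p+1 distinct points, then the space of restrictions to e of polynomials of total degree at most p in two variables has dimension exactly p+1. -/
open MvPolynomial

/-- The linear map restricting polynomials of total degree at most `p`
to functions on a set `e ⊆ ℝ²`. -/
noncomputable def resMap (p : ℕ) (e : Set (Fin 2 → ℝ)) :
    MvPolynomial.restrictTotalDegree (Fin 2) ℝ p →ₗ[ℝ] (e → ℝ) where
  toFun q x := MvPolynomial.eval (x : Fin 2 → ℝ) q.1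
  map_add' q r := by funext x; simp
  map_smul' c q := by funext x; simp

/-- degree bound for substituting degree-≤1 polynomials -/
lemma natDegree_aeval_le {σ : Type*} (q : MvPolynomial σ ℝ) (g : σ → Polynomial ℝ)
    (hg : ∀ i, (g i).natDegree ≤ 1) :
    (MvPolynomial.aeval g q).natDegree ≤ q.totalDegree := by
  classical
  rw [MvPolynomial.aeval_def, MvPolynomial.eval₂_eq]
  refine (Polynomial.natDegree_sum_le _ _).trans ?_
  rw [Finset.fold_max_le]
  refine ⟨Nat.zero_le _, fun d hd => ?_⟩
  simp only [Function.comp_apply]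
  refine (Polynomial.natDegree_mul_le).trans ?_
  have h1 : ((algebraMap ℝ (Polynomial ℝ)) (MvPolynomial.coeff d q)).natDegree = 0 := by
    rw [Polynomial.algebraMap_eq]; exact Polynomial.natDegree_C _
  have h2 : (∏ i ∈ d.support, g i ^ d i).natDegree ≤ ∑ i ∈ d.support, d i := by
    refine (Polynomial.natDegree_prod_le _ _).trans ?_
    refine Finset.sum_le_sum fun i _ => ?_
    calc (g i ^ d i).natDegree ≤ d i * (g i).natDegree := Polynomial.natDegree_pow_le
      _ ≤ d i * 1 := Nat.mul_le_mul_left _ (hg i)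
      _ = d i := Nat.mul_one _
  have h3 : ∑ i ∈ d.support, d i ≤ q.totalDegree :=
    MvPolynomial.le_totalDegree hd
  omega

lemma key (p : ℕ) (e : Set (Fin 2 → ℝ)) (t s : Fin 2) (hts : t ≠ s) (α β : ℝ)
    (hl : ∀ x ∈ e, x s = α * x t + β)
    (hpts : ∃ S : Finset (Fin 2 → ℝ), ↑S ⊆ e ∧ p + 1 ≤ S.card) :
    Module.finrank ℝ (LinearMap.range (resMap p e)) = p + 1 := by
  classical
  -- the family of monomial functions
  set f : Fin (p + 1) → (e → ℝ) := fun k x => (x.1 t) ^ (k : ℕ) with hf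
  -- x ↦ x t is injective on e
  have hinj : ∀ x ∈ e, ∀ y ∈ e, x t = y t → x = y := by
    intro x hx y hy hxy
    funext i
    have hi : i = t ∨ i = s := by omega
    rcases hi with rfl | rfl
    · exact hxy
    · rw [hl x hx, hl y hy, hxy]
  -- linear independence of f
  have hindep : LinearIndependent ℝ f := by
    rw [Fintype.linearIndependent_iff]
    intro c hc k
    obtain ⟨S, hSe, hScard⟩ := hpts
    set P : Polynomial ℝ := ∑ j : Fin (p + 1), Polynomial.C (c j) * Polynomial.X ^ (j : ℕ)
      with hP
    have hdeg : P.natDegree ≤ p := by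
      refine (Polynomial.natDegree_sum_le _ _).trans ?_
      rw [Finset.fold_max_le]
      refine ⟨Nat.zero_le _, fun j _ => ?_⟩
      simp only [Function.comp_apply]
      refine (Polynomial.natDegree_mul_le).trans ?_
      have := Polynomial.natDegree_C (c j)
      have h2 : (Polynomial.X ^ (j : ℕ) : Polynomial ℝ).natDegree ≤ (j : ℕ) :=
        (Polynomial.natDegree_X_pow _).le
      have := j.2
      omega
    have hPz : P = 0 := by
      refine Polynomial.eq_zero_of_natDegree_lt_card_of_eval_eq_zero' P
        (S.image (fun x => x t)) ?_ ?_
      · intro y hy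
        simp only [Finset.mem_image] at hy
        obtain ⟨x, hxS, rfl⟩ := hy
        have hx : x ∈ e := hSe hxS
        have := congrFun hc ⟨x, hx⟩
        simpa [hP, Polynomial.eval_finset_sum, hf] using this
      · have : (S.image (fun x => x t)).card = S.card := by
          refine Finset.card_image_of_injOn ?_
          intro x hx y hy hxy
          exact hinj x (hSe hx) y (hSe hy) hxy
        rw [this]
        exact Nat.lt_of_lt_of_le (Nat.lt_succ_of_le hdeg) hScard
    have : P.coeff (k : ℕ) = 0 := by rw [hPz]; simp
    simp only [hP, Polynomial.finset_sum_coeff, Polynomial.coeff_C_mul,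
      Polynomial.coeff_X_pow, Polynomial.coeff_zero] at this
    rw [Finset.sum_eq_single k] at this
    · simpa using this
    · intro j _ hj
      have : (j : ℕ) ≠ (k : ℕ) := fun h => hj (Fin.ext h)
      simp [Ne.symm this]
    · simp
  -- range = span of f
  have hrange : LinearMap.range (resMap p e) = Submodule.span ℝ (Set.range f) := by
    apply le_antisymm
    · rintro _ ⟨⟨q, hq⟩, rfl⟩
      rw [MvPolynomial.mem_restrictTotalDegree] at hq
      -- substitute coordinates
      set g : Fin 2 → Polynomial ℝ := fun i =>
        if i = t then Polynomial.X else Polynomial.C α * Polynomial.X + Polynomial.C β with hg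
      have hgdeg : ∀ i, (g i).natDegree ≤ 1 := by
        intro i
        by_cases h : i = t
        · simp [hg, h]
        · simp only [hg, if_neg h]
          exact Polynomial.natDegree_linear_le
      set Q := MvPolynomial.aeval g q with hQ
      have hQdeg : Q.natDegree ≤ p := (natDegree_aeval_le q g hgdeg).trans hq
      have heval : ∀ x : e, MvPolynomial.eval (x : Fin 2 → ℝ) q = Q.eval (x.1 t) := by
        rintro ⟨x, hx⟩
        have : Q.eval (x t) = (Polynomial.aeval (x t)).toRingHom Q := by simp
        rw [this]
        show _ = ((Polynomial.aeval (x t)).comp (MvPolynomial.aeval g)) q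
        rw [MvPolynomial.comp_aeval]
        have hgx : (fun i => Polynomial.aeval (x t) (g i)) = x := by
          funext i
          have hi : i = t ∨ i = s := by omega
          rcases hi with rfl | rfl
          · simp [hg]
          · rw [hl x hx]
            simp [hg, Ne.symm hts]
        rw [hgx, MvPolynomial.aeval_def, MvPolynomial.eval]
        rfl
      have hrepr : resMap p e ⟨q, (MvPolynomial.mem_restrictTotalDegree _ _ _).mpr hq⟩
          = ∑ k : Fin (p + 1), Q.coeff (k : ℕ) • f k := by
        funext x
        have := heval x
        simp only [resMap, LinearMap.coe_mk, AddHom.coe_mk] at this ⊢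
        rw [this, Polynomial.eval_eq_sum_range' (lt_of_le_of_lt hQdeg (Nat.lt_succ_self p))]
        rw [← Fin.sum_univ_eq_sum_range (fun i => Q.coeff i * (x.1 t) ^ i) (p + 1)]
        simp [hf, Finset.sum_apply]
      rw [hrepr]
      exact Submodule.sum_mem _ fun k _ =>
        Submodule.smul_mem _ _ (Submodule.subset_span ⟨k, rfl⟩)
    · rw [Submodule.span_le]
      rintro _ ⟨k, rfl⟩
      have hmem : (MvPolynomial.X t ^ (k : ℕ) : MvPolynomial (Fin 2) ℝ) ∈
          MvPolynomial.restrictTotalDegree (Fin 2) ℝ p := by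
        rw [MvPolynomial.mem_restrictTotalDegree]
        refine (MvPolynomial.totalDegree_pow _ _).trans ?_
        have := k.2
        simp [MvPolynomial.totalDegree_X]
        omega
      refine ⟨⟨_, hmem⟩, ?_⟩
      funext x
      simp [resMap, hf]
  rw [hrange]
  rw [finrank_span_eq_card hindep]
  simp

theorem stmt2 (p : ℕ) (e : Set (Fin 2 → ℝ))
    (hline : ∃ a b c : ℝ, (a, b) ≠ (0, 0) ∧ ∀ x ∈ e, a * x 0 + b * x 1 + c = 0)
    (hpts : ∃ S : Finset (Fin 2 → ℝ), ↑S ⊆ e ∧ p + 1 ≤ S.card) :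
    Module.finrank ℝ (LinearMap.range (resMap p e)) = p + 1 := by
  obtain ⟨a, b, c, hab, hl⟩ := hline
  by_cases hb : b ≠ 0
  · refine key p e 0 1 (by omega) (-a / b) (-c / b) ?_ hpts
    intro x hx
    have h := hl x hx
    have : x 1 = (-a * x 0 + -c) / b := by rw [eq_div_iff hb]; linarith
    rw [this]; ring
  · have ha : a ≠ 0 := by
      intro h; push_neg at hb; exact hab (by simp [h, hb])
    refine key p e 1 0 (by omega) (-b / a) (-c / a) ?_ hpts
    intro x hx
    have h := hl x hx
    have : x 0 = (-b * x 1 + -c) / a := by rw [eq_div_iff ha]; linarith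
    rw [this]; ring
end

section
/- Let M be the Gram matrix of vectors b_1,...,b_n in a real inner product space, and suppose P^T M P = R^T R where P is a permutation matrix corresponding to a permutation p, and R = (R_11 R_12) is upper triangular with R_11 an r×r upper triangular matrix with strictly positive diagonal entries (a rank-revealing Cholesky decomposition). Then {b_{p(1)}, ..., b_{p(r)}} is a basis for the span of {b_1, ..., b_n}. -/
open Matrix
open scoped RealInnerProductSpace

/-!
Write `c = b ∘ p` and let `d j ∈ ℝʳ` be the `j`-th column of `R`. The decomposition says that `c`
and `d` have the same Gram matrix `RᵀR`, hence `‖∑ lⱼ cⱼ‖ = ‖∑ lⱼ dⱼ‖` and the two families satisfy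
the same linear relations. The first `r` columns of `R` form the triangular block `R₁₁` with
nonzero diagonal, so they are a basis of `ℝʳ`; transporting linear relations back to `c`, the
vectors `c ∘ Fin.castLE hr` are independent and every `c j` lies in their span.
-/

open Submodule

section KernelTransfer

open LinearMap

variable {K U U' V W ι κ : Type*} [Ring K] [AddCommGroup U] [AddCommGroup U'] [AddCommGroup V]
  [AddCommGroup W] [Module K U] [Module K U'] [Module K V] [Module K W]

theorem LinearMap.apply_mem_range_comp_iff_of_ker_eq {f : U →ₗ[K] V} {g : U →ₗ[K] W}
    (h : ker f = ker g) (m : U' →ₗ[K] U) (u : U) :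
    f u ∈ range (f ∘ₗ m) ↔ g u ∈ range (g ∘ₗ m) := by
  simp only [mem_range, comp_apply, ← sub_mem_ker_iff, h]

theorem mem_span_range_comp_iff_of_ker_linearCombination_eq {c : ι → V} {d : ι → W}
    (h : ker (Finsupp.linearCombination K c) = ker (Finsupp.linearCombination K d))
    (s : κ → ι) (j : ι) :
    c j ∈ span K (Set.range (c ∘ s)) ↔ d j ∈ span K (Set.range (d ∘ s)) := by
  simpa only [← Finsupp.range_linearCombination, Finsupp.linearCombination_comp,
    Finsupp.linearCombination_single, one_smul] using
    apply_mem_range_comp_iff_of_ker_eq h (Finsupp.lmapDomain K K s) (Finsupp.single j 1)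

end KernelTransfer

section Gram

open scoped InnerProductSpace

variable {𝕜 E F ι m n : Type*} [RCLike 𝕜] [NormedAddCommGroup E] [InnerProductSpace 𝕜 E]
  [NormedAddCommGroup F] [InnerProductSpace 𝕜 F]

theorem ker_linearCombination_eq_of_gram_eq {v : ι → E} {w : ι → F}
    (h : gram 𝕜 v = gram 𝕜 w) :
    LinearMap.ker (Finsupp.linearCombination 𝕜 v) =
      LinearMap.ker (Finsupp.linearCombination 𝕜 w) := by
  have hvw (i j : ι) : ⟪v i, v j⟫_𝕜 = ⟪w i, w j⟫_𝕜 := by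
    simpa only [gram_apply] using congr_fun₂ h i j
  ext l
  have hnorm : ⟪Finsupp.linearCombination 𝕜 v l, Finsupp.linearCombination 𝕜 v l⟫_𝕜 =
      ⟪Finsupp.linearCombination 𝕜 w l, Finsupp.linearCombination 𝕜 w l⟫_𝕜 := by
    simp only [Finsupp.linearCombination_apply, Finsupp.sum_inner, Finsupp.inner_sum,
      inner_smul_left, inner_smul_right, hvw]
  rw [LinearMap.mem_ker, LinearMap.mem_ker, ← inner_self_eq_zero (𝕜 := 𝕜), hnorm,
    inner_self_eq_zero]

theorem gram_toLp_transpose [Fintype m] (A : Matrix m n 𝕜) :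
    gram 𝕜 (fun j => WithLp.toLp 2 (Aᵀ j)) = Aᴴ * A := by
  ext i j
  simp [gram_apply, mul_apply, PiLp.inner_apply, mul_comm]

theorem linearIndependent_comp_of_gram_eq_conjTranspose_mul [Fintype n]
    [DecidableEq n] {v : ι → E} {A : Matrix n ι 𝕜} (h : gram 𝕜 v = Aᴴ * A) {f : n → ι}
    (hA : (A.submatrix id f).det ≠ 0) : LinearIndependent 𝕜 (v ∘ f) := by
  have hgram : gram 𝕜 (v ∘ f) = (A.submatrix id f)ᴴ * A.submatrix id f := by
    ext i j
    simpa [mul_apply] using congr_fun₂ h (f i) (f j)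
  rw [← det_gram_ne_zero_iff_linearIndependent, hgram, det_mul, det_conjTranspose]
  exact mul_ne_zero (star_ne_zero.mpr hA) hA

end Gram

theorem Matrix.transpose_mul_mul_eq_submatrix {n R : Type*} [Fintype n] [DecidableEq n]
    [NonAssocSemiring R] (M : Matrix n n R) (p : Equiv.Perm n) {P : Matrix n n R}
    (hP : ∀ i j, P i j = if i = p j then 1 else 0) : Pᵀ * M * P = M.submatrix p p := by
  ext i j
  simp [mul_apply, hP]

theorem Matrix.det_submatrix_castLE_ne_zero {K : Type*} [CommRing K] [IsDomain K] {r n : ℕ}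
    (hr : r ≤ n) {R : Matrix (Fin r) (Fin n) K}
    (hupper : ∀ (i : Fin r) (j : Fin n), (j : ℕ) < (i : ℕ) → R i j = 0)
    (hdiag : ∀ i : Fin r, R i (Fin.castLE hr i) ≠ 0) :
    (R.submatrix id (Fin.castLE hr)).det ≠ 0 := by
  have htri : (R.submatrix id (Fin.castLE hr)).IsUpperTriangular := fun i j hij => hupper i _ hij
  rw [det_of_isUpperTriangular htri]
  exact Finset.prod_ne_zero_iff.mpr fun i _ => hdiag i

theorem stmt4 {V : Type*} [NormedAddCommGroup V] [InnerProductSpace ℝ V]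
    (n r : ℕ) (hr : r ≤ n) (b : Fin n → V)
    (M : Matrix (Fin n) (Fin n) ℝ) (hM : ∀ i j, M i j = ⟪b j, b i⟫)
    (p : Equiv.Perm (Fin n))
    (P : Matrix (Fin n) (Fin n) ℝ) (hP : ∀ i j, P i j = if i = p j then 1 else 0)
    (R : Matrix (Fin r) (Fin n) ℝ)
    (hdecomp : Pᵀ * M * P = Rᵀ * R)
    (hupper : ∀ (i : Fin r) (j : Fin n), (j : ℕ) < (i : ℕ) → R i j = 0)
    (hdiag : ∀ i : Fin r, 0 < R i (Fin.castLE hr i)) :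
    LinearIndependent ℝ (fun i : Fin r => b (p (Fin.castLE hr i))) ∧
      Submodule.span ℝ (Set.range fun i : Fin r => b (p (Fin.castLE hr i))) =
        Submodule.span ℝ (Set.range b) := by
  set cols : Fin n → EuclideanSpace ℝ (Fin r) := fun j => WithLp.toLp 2 (Rᵀ j)
  have hM_gram : M = gram ℝ b := by
    ext i j
    rw [hM, gram_apply, real_inner_comm]
  have hgram_b : gram ℝ (b ∘ p) = Rᴴ * R := by
    rw [conjTranspose_eq_transpose_of_trivial, ← hdecomp, transpose_mul_mul_eq_submatrix M p hP,
      hM_gram]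
    rfl
  have hgram_cols : gram ℝ cols = Rᴴ * R := gram_toLp_transpose R
  have hdet := det_submatrix_castLE_ne_zero hr hupper fun i => (hdiag i).ne'
  have hli_b := linearIndependent_comp_of_gram_eq_conjTranspose_mul hgram_b hdet
  have hli_cols := linearIndependent_comp_of_gram_eq_conjTranspose_mul hgram_cols hdet
  have hspan_cols : span ℝ (Set.range (cols ∘ Fin.castLE hr)) = ⊤ :=
    hli_cols.span_eq_top_of_card_eq_finrank' (by simp)
  have hker := ker_linearCombination_eq_of_gram_eq (hgram_b.trans hgram_cols.symm)
  refine ⟨hli_b, le_antisymm (span_mono (Set.range_comp_subset_range _ _)) ?_⟩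
  rw [← EquivLike.range_comp b p, span_le]
  rintro _ ⟨j, rfl⟩
  exact (mem_span_range_comp_iff_of_ker_linearCombination_eq hker (Fin.castLE hr) j).mpr
    (hspan_cols ▸ mem_top)
end

section
/- Let p be a homogeneous polynomial of degree j in two real variables. Define q(x) = Σ_{k=0}^{⌊j/2⌋} ((-1)^k (j-k)! / ((j+1)! (k+1)!)) (|x|^2/4)^{k+1} (Δ^k p)(x). Then Δq = p. -/
/-!
With `r = |x|² / 4`, Euler's identity `x · ∇f = n f` for `f` homogeneous of degree `n` gives
`Δ(r f) = (n + 1) f + r Δf`, hence `Δ(r^(m+1) f) = (m + 1)(m + 1 + n) r^m f + r^(m+1) Δf`.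
Applied to `f = Δ^k p`, of degree `j - 2k`, this turns `Δq` into a telescoping sum in the
polynomials `r^k Δ^k p`: the coefficients make the terms with `1 ≤ k ≤ ⌊j/2⌋` cancel, the term
`k = 0` is `p`, and `Δ^(⌊j/2⌋+1) p = 0` because its degree would be negative.
-/

open MvPolynomial

/-- The Laplacian on polynomials in two variables. -/
noncomputable def lap (p : MvPolynomial (Fin 2) ℝ) : MvPolynomial (Fin 2) ℝ :=
  pderiv 0 (pderiv 0 p) + pderiv 1 (pderiv 1 p)

theorem Finset.sum_range_succ_mul_telescope {S : Type*} [NonUnitalNonAssocSemiring S]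
    (c d a : ℕ → S) (N : ℕ) :
    ∑ k ∈ Finset.range (N + 1), (c k * a (k + 1) + d k * a k) =
      d 0 * a 0 + ∑ k ∈ Finset.range N, (c k + d (k + 1)) * a (k + 1) + c N * a (N + 1) := by
  simp only [sum_add_distrib, add_mul]
  rw [sum_range_succ, sum_range_succ' (fun k => d k * a k)]
  abel

theorem lap_sum {ι : Type*} (s : Finset ι) (f : ι → MvPolynomial (Fin 2) ℝ) :
    lap (∑ i ∈ s, f i) = ∑ i ∈ s, lap (f i) := by
  simp only [lap, map_sum, Finset.sum_add_distrib]

theorem lap_C_mul (a : ℝ) (p : MvPolynomial (Fin 2) ℝ) : lap (C a * p) = C a * lap p := by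
  simp only [lap, pderiv_C_mul, mul_add]

section

variable {n : ℕ} {p : MvPolynomial (Fin 2) ℝ}

theorem isHomogeneous_lap (hp : p.IsHomogeneous n) : (lap p).IsHomogeneous (n - 2) :=
  have h (i : Fin 2) := (hp.pderiv (i := i)).pderiv (i := i)
  (h 0).add (h 1)

theorem isHomogeneous_iterate_lap (hp : p.IsHomogeneous n) (k : ℕ) :
    (lap^[k] p).IsHomogeneous (n - 2 * k) := by
  induction k with
  | zero => simpa using hp
  | succ k ih =>
    rw [Function.iterate_succ_apply', Nat.mul_succ, ← Nat.sub_sub]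
    exact isHomogeneous_lap ih

theorem lap_eq_zero_of_isHomogeneous (hp : p.IsHomogeneous n) (hn : n ≤ 1) : lap p = 0 := by
  have hconst (i : Fin 2) : ∃ c, pderiv i p = C c := by
    have h : (pderiv i p).IsHomogeneous 0 := Nat.sub_eq_zero_of_le hn ▸ hp.pderiv
    rw [← totalDegree_zero_iff_isHomogeneous, totalDegree_eq_zero_iff_eq_C] at h
    exact ⟨_, h⟩
  obtain ⟨c₀, h₀⟩ := hconst 0
  obtain ⟨c₁, h₁⟩ := hconst 1
  simp only [lap, h₀, h₁, pderiv_C, add_zero]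

noncomputable def quarterNormSq : MvPolynomial (Fin 2) ℝ := C (1 / 4) * (X 0 ^ 2 + X 1 ^ 2)

theorem isHomogeneous_quarterNormSq : quarterNormSq.IsHomogeneous 2 :=
  ((isHomogeneous_X_pow 0 2).add (isHomogeneous_X_pow 1 2)).C_mul _

theorem pderiv_quarterNormSq (i : Fin 2) : pderiv i quarterNormSq = C (1 / 2) * X i := by
  have h : (C (1 / 4) : MvPolynomial (Fin 2) ℝ) * 2 = C (1 / 2) := by
    rw [← map_ofNat C 2, ← map_mul]; norm_num
  revert i
  refine Fin.forall_fin_two.mpr ⟨?_, ?_⟩ <;>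
    simp only [quarterNormSq, pderiv_C_mul, map_add, pderiv_pow, pderiv_X_self, pderiv_X_of_ne,
      ne_eq, Fin.reduceEq, not_false_eq_true, mul_zero, add_zero, zero_add] <;>
    linear_combination X _ * h

theorem lap_quarterNormSq_mul (hp : p.IsHomogeneous n) :
    lap (quarterNormSq * p) = C ((n : ℝ) + 1) * p + quarterNormSq * lap p := by
  have euler := hp.sum_X_mul_pderiv
  rw [Fin.sum_univ_two, nsmul_eq_mul] at euler
  have h : (C (1 / 2) : MvPolynomial (Fin 2) ℝ) * 2 = 1 := by
    rw [← map_ofNat C 2, ← map_mul]; norm_num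
  simp only [lap, Derivation.leibniz, smul_eq_mul, pderiv_quarterNormSq, map_add,
    pderiv_X, Pi.single_eq_same, mul_one, derivation_C, mul_zero, add_zero, map_natCast, C_1]
  linear_combination euler + (p + X 0 * pderiv 0 p + X 1 * pderiv 1 p) * h

theorem lap_quarterNormSq_pow_succ_mul (hp : p.IsHomogeneous n) (m : ℕ) :
    lap (quarterNormSq ^ (m + 1) * p) =
      C (((m : ℝ) + 1) * (m + 1 + n)) * (quarterNormSq ^ m * p) +
        quarterNormSq ^ (m + 1) * lap p := by
  induction m with
  | zero => simpa [add_comm] using lap_quarterNormSq_mul hp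
  | succ m ih =>
    have hdeg := (isHomogeneous_quarterNormSq.pow (m + 1)).mul hp
    rw [pow_succ', mul_assoc, lap_quarterNormSq_mul hdeg, ih]
    simp only [map_add, map_mul, map_natCast, map_one]
    push_cast
    ring

theorem lap_quarterNormSq_pow_succ_mul_iterate_lap {j k : ℕ} (hp : p.IsHomogeneous j)
    (hk : 2 * k ≤ j) :
    lap (quarterNormSq ^ (k + 1) * lap^[k] p) =
      C (((k : ℝ) + 1) * (j - k + 1)) * (quarterNormSq ^ k * lap^[k] p) +
        quarterNormSq ^ (k + 1) * lap^[k + 1] p := by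
  have hweight : ((k : ℝ) + 1) * (k + 1 + ((j - 2 * k : ℕ) : ℝ)) = (k + 1) * (j - k + 1) := by
    push_cast [Nat.cast_sub hk]
    ring
  rw [lap_quarterNormSq_pow_succ_mul (isHomogeneous_iterate_lap hp k), hweight,
    Function.iterate_succ_apply']

end

noncomputable def lapInvCoeff (j k : ℕ) : ℝ :=
  (-1 : ℝ) ^ k * (Nat.factorial (j - k)) / ((Nat.factorial (j + 1)) * (Nat.factorial (k + 1)))

theorem lapInvCoeff_zero_mul (j : ℕ) : lapInvCoeff j 0 * (j + 1) = 1 := by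
  rw [lapInvCoeff, Nat.sub_zero, Nat.factorial_succ j]
  field_simp
  push_cast
  ring

theorem lapInvCoeff_add_lapInvCoeff_succ_mul {j k : ℕ} (h : k < j) :
    lapInvCoeff j k + lapInvCoeff j (k + 1) * ((k + 2) * (j - k)) = 0 := by
  have hjk : j - k = j - (k + 1) + 1 := by omega
  rw [lapInvCoeff, lapInvCoeff, hjk, Nat.factorial_succ (j - (k + 1)), Nat.factorial_succ (k + 1)]
  push_cast [Nat.cast_sub h]
  field_simp
  ring

theorem stmt8 (j : ℕ) (p : MvPolynomial (Fin 2) ℝ) (hp : p.IsHomogeneous j) :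
    lap (∑ k ∈ Finset.range (j / 2 + 1),
      MvPolynomial.C (((-1 : ℝ) ^ k * (Nat.factorial (j - k)) /
          ((Nat.factorial (j + 1)) * (Nat.factorial (k + 1))))) *
        (MvPolynomial.C (1 / 4 : ℝ) * (X 0 ^ 2 + X 1 ^ 2)) ^ (k + 1) *
        (lap^[k] p)) = p := by
  change lap (∑ k ∈ Finset.range (j / 2 + 1),
    C (lapInvCoeff j k) * quarterNormSq ^ (k + 1) * lap^[k] p) = p
  set a : ℕ → MvPolynomial (Fin 2) ℝ := fun k => quarterNormSq ^ k * lap^[k] p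
  have hterm : ∀ k ∈ Finset.range (j / 2 + 1),
      lap (C (lapInvCoeff j k) * quarterNormSq ^ (k + 1) * lap^[k] p) =
        C (lapInvCoeff j k) * a (k + 1) +
          C (lapInvCoeff j k * ((k + 1) * (j - k + 1))) * a k := by
    intro k hk
    rw [Finset.mem_range] at hk
    rw [mul_assoc, lap_C_mul, lap_quarterNormSq_pow_succ_mul_iterate_lap hp (by omega)]
    simp only [a, map_mul]
    ring
  have hmiddle : ∀ k ∈ Finset.range (j / 2),
      (C (lapInvCoeff j k) + C (lapInvCoeff j (k + 1) * ((↑(k + 1) + 1) * (j - ↑(k + 1) + 1)))) *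
        a (k + 1) = 0 := by
    intro k hk
    have hkj : k < j := by rw [Finset.mem_range] at hk; omega
    have hcoeff : lapInvCoeff j k +
        lapInvCoeff j (k + 1) * ((↑(k + 1) + 1) * (j - ↑(k + 1) + 1)) = 0 := by
      push_cast
      linear_combination lapInvCoeff_add_lapInvCoeff_succ_mul hkj
    rw [← map_add, hcoeff, map_zero, zero_mul]
  have hvanish : a (j / 2 + 1) = 0 := by
    simp only [a]
    rw [Function.iterate_succ_apply',
      lap_eq_zero_of_isHomogeneous (isHomogeneous_iterate_lap hp (j / 2)) (by omega), mul_zero]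
  rw [lap_sum, Finset.sum_congr rfl hterm, Finset.sum_range_succ_mul_telescope,
    Finset.sum_eq_zero hmiddle, hvanish]
  simp [a, lapInvCoeff_zero_mul]
end
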